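/- Let X, Y, Z be real Banach spaces, K ⊆ Y a convex cone with nonempty interior, S ⊆ X a nonempty closed set, C ⊆ Z a proper closed convex cone with C ≠ {0}, f : X → Y, and G : X ⇉ Z with G(x) ≠ ∅ for all x. Let R = S ∩ {x : G(x) ⊆ C} and let x̄ ∈ R be a locally weakly efficient solution of minimizing f over R. Suppose that f is Fréchet differentiable at x̄; G is lower semicontinuous at every point of some ball around x̄ and metrically C-increasing around x̄ relative to S; G admits a positively homogeneous set-valued mapping H as an outer prederivative at x̄; the derivative Df(x̄) is K-convexlike on H⁺¹(C) ∩ T(S,x̄); H(0) ⊆ C; and H is Lipschitz with respect to the Hausdorff distance. Then there exists y* ∈ K⁺ \ {0} such that −Df(x̄)* y* belongs to the negative dual cone of H⁺¹(C) ∩ T(S,x̄), i.e. ⟨−Df(x̄)* y*, v⟩ ≤ 0 for all v ∈ H⁺¹(C) ∩ T(S,x̄). -/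

import Mathlib

open Filter Topology Metric Set Pointwise
open scoped ENNReal NNReal

noncomputable section

/-- The `r`-enlargement `B(A,r)` of a set `A`. -/
def enlarge {Z : Type*} [SeminormedAddCommGroup Z] (A : Set Z) (r : ℝ) : Set Z :=
  {z | Metric.infDist z A ≤ r}

/-- Merit function `ν(x) = sup_{z ∈ G(x)} dist(z, C)`, with values in `[0,∞]`. -/
def merit {X Z : Type*} [SeminormedAddCommGroup Z] (G : X → Set Z) (C : Set Z) (x : X) : ℝ≥0∞ :=
  ⨆ z ∈ G x, ENNReal.ofReal (Metric.infDist z C)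

/-- Lower semicontinuity of a set-valued map at a point. -/
def LscAt {X Z : Type*} [TopologicalSpace X] [TopologicalSpace Z] (G : X → Set Z) (x : X) : Prop :=
  ∀ V : Set Z, IsOpen V → (G x ∩ V).Nonempty → ∃ U ∈ nhds x, ∀ u ∈ U, (G u ∩ V).Nonempty

/-- `G` is l.s.c. at every point of some ball around `xb`. -/
def LscAround {X Z : Type*} [SeminormedAddCommGroup X] [TopologicalSpace Z]
    (G : X → Set Z) (xb : X) : Prop :=
  ∃ ρ > 0, ∀ x ∈ Metric.closedBall xb ρ, LscAt G x

/-- `G` is metrically `C`-increasing around `xb` relative to `S`, with witnesses `α > 1`, `δ > 0`. -/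
def MetIncrWith {X Z : Type*} [SeminormedAddCommGroup X] [SeminormedAddCommGroup Z]
    (G : X → Set Z) (S : Set X) (C : Set Z) (xb : X) (α δ : ℝ) : Prop :=
  ∀ x ∈ Metric.closedBall xb δ ∩ S, ∀ r ∈ Set.Ioo (0:ℝ) δ,
    ∃ z ∈ Metric.closedBall x r ∩ S, enlarge (G z) (α * r) ⊆ enlarge (G x + C) r

/-- `G` is metrically `C`-increasing around `xb` relative to `S`. -/
def MetIncr {X Z : Type*} [SeminormedAddCommGroup X] [SeminormedAddCommGroup Z]
    (G : X → Set Z) (S : Set X) (C : Set Z) (xb : X) : Prop :=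
  ∃ α > 1, ∃ δ > 0, MetIncrWith G S C xb α δ

/-- The exact bound of metric `C`-increase of `G` around `xb`, relative to `S`. -/
def incrBound {X Z : Type*} [SeminormedAddCommGroup X] [SeminormedAddCommGroup Z]
    (G : X → Set Z) (S : Set X) (C : Set Z) (xb : X) : ℝ≥0∞ :=
  sSup {a : ℝ≥0∞ | ∃ α : ℝ, a = ENNReal.ofReal α ∧ 1 < α ∧ ∃ δ > 0, MetIncrWith G S C xb α δ}

open Classical in
/-- Strong slope of `φ` relative to `S` at `x`: `0` if `x` is a local minimizer of `φ` on `S`,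
otherwise `inf_{r>0} sup_{z ∈ B(x,r)∩S, z ≠ x} (φ(x) − φ(z))/‖x−z‖`. -/
def strongSlope {X : Type*} [SeminormedAddCommGroup X] (φ : X → ℝ≥0∞) (S : Set X) (x : X) :
    ℝ≥0∞ :=
  if ∃ r > 0, ∀ z ∈ S ∩ Metric.closedBall x r, φ x ≤ φ z then 0
  else ⨅ r ∈ Set.Ioi (0:ℝ), ⨆ z ∈ (S ∩ Metric.closedBall x r) \ {x},
    (φ x - φ z) / ENNReal.ofReal ‖x - z‖

/-- `ψ` is a local error bound function for `R` near `xb`, relative to `S`. -/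
def LocErrBoundFun {X : Type*} [SeminormedAddCommGroup X]
    (ψ : X → ℝ≥0∞) (R S : Set X) (xb : X) : Prop :=
  ∃ δ > 0, (∀ x ∈ Metric.closedBall xb δ ∩ S, ENNReal.ofReal (Metric.infDist x R) ≤ ψ x) ∧
    ∀ x ∈ R, ψ x = ENNReal.ofReal (Metric.infDist x R)

/-- `f` is `K`-Lipschitz near `xb` with constant `ℓ` and vector `e`. -/
def KLipschitzNearWith {X Y : Type*} [SeminormedAddCommGroup X] [SeminormedAddCommGroup Y]
    [NormedSpace ℝ Y] (f : X → Y) (K : Set Y) (xb : X) (ℓ : ℝ) (e : Y) : Prop :=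
  ∃ δ > 0, ∀ x₁ ∈ Metric.closedBall xb δ, ∀ x₂ ∈ Metric.closedBall xb δ,
    f x₁ - f x₂ + (ℓ * ‖x₁ - x₂‖) • e ∈ K

/-- `xb` is a locally weakly efficient solution of minimizing `f` over `R`
(w.r.t. the ordering cone `K`). -/
def LocWeakEffOn {X Y : Type*} [SeminormedAddCommGroup X] [SeminormedAddCommGroup Y]
    (f : X → Y) (R : Set X) (K : Set Y) (xb : X) : Prop :=
  ∃ δ > 0, ∀ x ∈ R ∩ Metric.closedBall xb δ, f xb - f x ∉ interior K

/-- `xb` is a locally efficient solution of minimizing `f` over `R`. -/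
def LocEffOn {X Y : Type*} [SeminormedAddCommGroup X] [SeminormedAddCommGroup Y]
    (f : X → Y) (R : Set X) (K : Set Y) (xb : X) : Prop :=
  ∃ δ > 0, ∀ x ∈ R ∩ Metric.closedBall xb δ, f xb - f x ∈ K → f x = f xb

/-- Contingent (Bouligand tangent) cone to `A` at `xb`. -/
def contingentCone {X : Type*} [SeminormedAddCommGroup X] [NormedSpace ℝ X]
    (A : Set X) (xb : X) : Set X :=
  {v | ∃ (vn : ℕ → X) (tn : ℕ → ℝ), Filter.Tendsto vn Filter.atTop (nhds v) ∧
    Filter.Tendsto tn Filter.atTop (nhds 0) ∧ (∀ n, 0 < tn n) ∧ ∀ n, xb + tn n • vn n ∈ A}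

/-- Feasible direction cone to `A` at `xb`. -/
def feasDirCone {X : Type*} [SeminormedAddCommGroup X] [NormedSpace ℝ X]
    (A : Set X) (xb : X) : Set X :=
  {v | ∃ δ > 0, ∀ t ∈ Set.Ioo (0:ℝ) δ, xb + t • v ∈ A}

/-- Weak feasible direction cone to `A` at `xb`. -/
def weakFeasDirCone {X : Type*} [SeminormedAddCommGroup X] [NormedSpace ℝ X]
    (A : Set X) (xb : X) : Set X :=
  {v | ∀ ε > 0, ∃ t ∈ Set.Ioo (0:ℝ) ε, xb + t • v ∈ A}

/-- Fréchet upper subdifferential of an `[0,∞]`-valued function `φ` (finite at `xb`) at `xb`. -/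
def FUpperSubdiff {X : Type*} [NormedAddCommGroup X] [NormedSpace ℝ X]
    (φ : X → ℝ≥0∞) (xb : X) : Set (X →L[ℝ] ℝ) :=
  {p | ∀ ε > 0, ∃ δ > 0, ∀ x ∈ Metric.ball xb δ, x ≠ xb →
    φ x ≠ ⊤ ∧ (φ x).toReal - (φ xb).toReal - p (x - xb) ≤ ε * ‖x - xb‖}

/-- `d` is the directional derivative of `f` at `xb` in direction `v`. -/
def HasDirDerivAt {X Y : Type*} [SeminormedAddCommGroup X] [NormedSpace ℝ X]
    [SeminormedAddCommGroup Y] [NormedSpace ℝ Y] (f : X → Y) (xb v : X) (d : Y) : Prop :=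
  Filter.Tendsto (fun t : ℝ => t⁻¹ • (f (xb + t • v) - f xb)) (nhdsWithin 0 (Set.Ioi 0)) (nhds d)

/-- `H` is an outer prederivative of `G` at `xb`. -/
def OuterPrederivAt {X Z : Type*} [SeminormedAddCommGroup X] [NormedSpace ℝ X]
    [SeminormedAddCommGroup Z] [NormedSpace ℝ Z] (G H : X → Set Z) (xb : X) : Prop :=
  (∀ t : ℝ, 0 < t → ∀ v, H (t • v) = t • H v) ∧
  ∀ ε > 0, ∃ δ > 0, ∀ x ∈ Metric.closedBall xb δ,
    G x ⊆ G xb + H (x - xb) + Metric.closedBall 0 (ε * ‖x - xb‖)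

/-- `H` is Lipschitz with respect to the Hausdorff distance. -/
def HausLipschitz {X Z : Type*} [SeminormedAddCommGroup X] [SeminormedAddCommGroup Z]
    (H : X → Set Z) : Prop :=
  ∃ l : ℝ, 0 ≤ l ∧ ∀ x₁ x₂ : X,
    EMetric.hausdorffEdist (H x₁) (H x₂) ≤ ENNReal.ofReal (l * ‖x₁ - x₂‖)

/-- `h` is the B-derivative of `f` at `xb`. -/
def IsBDerivAt {X Y : Type*} [NormedAddCommGroup X] [NormedSpace ℝ X]
    [NormedAddCommGroup Y] [NormedSpace ℝ Y] (f : X → Y) (h : X → Y) (xb : X) : Prop :=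
  Continuous h ∧ (∀ t : ℝ, 0 < t → ∀ v, h (t • v) = t • h v) ∧
  Filter.Tendsto (fun x => ‖x - xb‖⁻¹ • (f x - f xb - h (x - xb)))
    (nhdsWithin xb {xb}ᶜ) (nhds 0)

/-- Upper inverse image `H⁺¹(C)` of `C` through `H`. -/
def upperInv {X Z : Type*} (H : X → Set Z) (C : Set Z) : Set X := {x | H x ⊆ C}

end

/-!
Write `M = H⁺¹(C) ∩ T(S, xb)` and `R = S ∩ G⁺¹(C)`. The heart of the argument is `M ⊆ T(R, xb)`.
Along `xₙ = xb + tₙvₙ ∈ S` with `v ∈ M`, the outer prederivative and the Hausdorff-Lipschitz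
property keep every point of `G(xₙ)` within `o(tₙ)` of `C`. Metric `C`-increase then moves `xₙ`
by `o(tₙ)` to a point `z` of `S` whose whole image lies in `C`: every point within `αr` of some
`w ∈ G(z)` is within `αr` of `C`, and for a closed convex cone this forces `w ∈ C`. Weak
efficiency forbids `-Df(xb) v ∈ int K` for `v ∈ T(R, xb)`, so the convex set `Df(xb)(M) + K`
misses `-int K`, and a Hahn–Banach separation of the two gives `y*`.
-/

section

variable {E : Type*} [NormedAddCommGroup E] [NormedSpace ℝ E]

theorem le_of_forall_pos_le_add_mul {a b c : ℝ} (h : ∀ t > 0, c ≤ a + t * b) : c ≤ a := by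
  have hlim : Tendsto (fun t : ℝ => a + t * b) (𝓝[>] 0) (𝓝 a) :=
    ((by fun_prop : Continuous fun t : ℝ => a + t * b).tendsto' 0 a (by simp)).mono_left
      nhdsWithin_le_nhds
  exact ge_of_tendsto hlim (eventually_nhdsWithin_of_forall h)

theorem ContinuousLinearMap.exists_norm_lt_one_lt_apply (ξ : E →L[ℝ] ℝ) {r : ℝ} (hr : r < ‖ξ‖) :
    ∃ y : E, ‖y‖ < 1 ∧ r < ξ y := by
  obtain ⟨x, hx, hrx⟩ := ξ.exists_lt_apply_of_lt_opNorm hr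
  rcases le_total 0 (ξ x) with h | h
  · exact ⟨x, hx, by rwa [Real.norm_of_nonneg h] at hrx⟩
  · exact ⟨-x, by rwa [norm_neg], by rwa [map_neg, ← Real.norm_of_nonpos h]⟩

theorem Metric.infDist_le_add_of_forall_infDist_le {M : Type*} [PseudoMetricSpace M]
    {A B : Set M} {p : M} {r s : ℝ}
    (hA : A.Nonempty) (hpA : infDist p A ≤ r) (hAB : ∀ q ∈ A, infDist q B ≤ s) :
    infDist p B ≤ r + s := by
  refine le_of_forall_pos_lt_add fun ε hε => ?_
  obtain ⟨q, hq, hpq⟩ := (infDist_lt_iff hA).1 (lt_add_of_le_of_pos hpA hε)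
  calc infDist p B ≤ infDist q B + dist p q := infDist_le_infDist_add_dist
    _ < r + s + ε := by linarith [hAB q hq]

theorem Convex.add_mem_of_smul_mem {s : Set E} (hs : Convex ℝ s)
    (hcone : ∀ t : ℝ, 0 < t → ∀ x ∈ s, t • x ∈ s) {x y : E} (hx : x ∈ s) (hy : y ∈ s) :
    x + y ∈ s := by
  have hmid : (2⁻¹ : ℝ) • x + (2⁻¹ : ℝ) • y ∈ s :=
    hs hx hy (by norm_num) (by norm_num) (by norm_num)
  simpa [smul_add, smul_smul] using hcone 2 two_pos _ hmid

end

namespace ConvexCone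

variable {E : Type*} [NormedAddCommGroup E] [NormedSpace ℝ E]

def ofConvex {s : Set E} (hs : Convex ℝ s) (hcone : ∀ t : ℝ, 0 < t → ∀ x ∈ s, t • x ∈ s) :
    ConvexCone ℝ E where
  carrier := s
  smul_mem' t ht x hx := hcone t ht x hx
  add_mem' _ hx _ hy := hs.add_mem_of_smul_mem hcone hx hy

variable (K : ConvexCone ℝ E)

theorem smul_set_subset {t : ℝ} (ht : 0 < t) : t • (K : Set E) ⊆ K := by
  rintro _ ⟨k, hk, rfl⟩
  exact K.smul_mem ht hk

theorem smul_mem_interior {t : ℝ} (ht : 0 < t) {y : E} (hy : y ∈ interior (K : Set E)) :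
    t • y ∈ interior (K : Set E) :=
  interior_mono (K.smul_set_subset ht) (interior_smul₀ ht.ne' (K : Set E) ▸ smul_mem_smul_set hy)

theorem add_mem_interior {k y : E} (hk : k ∈ K) (hy : y ∈ interior (K : Set E)) :
    k + y ∈ interior (K : Set E) := by
  have hsub : k +ᵥ (K : Set E) ⊆ K := by
    rintro _ ⟨z, hz, rfl⟩
    exact K.add_mem hk hz
  exact interior_mono hsub (interior_vadd k (K : Set E) ▸ vadd_mem_vadd_set hy)

theorem infDist_add_le (hK : (K : Set E).Nonempty) {c : E} (hc : c ∈ K) (u : E) :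
    infDist (u + c) K ≤ infDist u K := by
  have hsub : c +ᵥ (K : Set E) ⊆ K := by
    rintro _ ⟨z, hz, rfl⟩
    exact K.add_mem hc hz
  calc infDist (u + c) K ≤ infDist (c +ᵥ u) (c +ᵥ (K : Set E)) := by
        rw [vadd_eq_add, add_comm]; exact infDist_le_infDist_of_subset hsub hK.vadd_set
    _ = infDist u K := by simp only [infDist, infEDist_vadd]

theorem infDist_smul_le (hK : (K : Set E).Nonempty) {t : ℝ} (ht : 0 < t) (p : E) :
    infDist (t • p) K ≤ t * infDist p K := by
  calc infDist (t • p) K ≤ infDist (t • p) (t • (K : Set E)) :=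
        infDist_le_infDist_of_subset (K.smul_set_subset ht) hK.smul_set
    _ = t * infDist p K := by rw [infDist_smul₀ ht.ne', Real.norm_of_nonneg ht.le]

/-- If `w ∉ K`, separate it from `K` by some `ξ ≤ 0` on `K`; shifting `w` by `ρ` in a direction
where `ξ` almost attains its norm pushes it to distance more than `ρ` from `K`. -/
theorem mem_of_forall_infDist_add_le (hKcl : IsClosed (K : Set E)) (hK0 : (0 : E) ∈ K)
    {w : E} {ρ : ℝ} (hρ : 0 < ρ) (h : ∀ b : E, ‖b‖ ≤ ρ → infDist (w + b) K ≤ ρ) : w ∈ K := by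
  by_contra hw
  obtain ⟨ξ, u, hξK, hξw⟩ := geometric_hahn_banach_closed_point K.convex hKcl hw
  have hu : 0 < u := by simpa using hξK 0 hK0
  have hξK' : ∀ c ∈ K, ξ c ≤ 0 := fun c hc => by
    by_contra! hpos
    have := hξK _ (K.smul_mem (div_pos hu hpos) hc)
    rw [map_smul, smul_eq_mul, div_mul_cancel₀ _ hpos.ne'] at this
    exact this.false
  have hξ : 0 < ‖ξ‖ := norm_pos_iff.2 fun h0 => by simp [h0] at hξw; linarith
  have hlow : ∀ z, ξ z / ‖ξ‖ ≤ infDist z K := fun z => (le_infDist ⟨0, hK0⟩).2 fun c hc => by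
    rw [div_le_iff₀ hξ, dist_eq_norm, mul_comm]
    calc ξ z ≤ ξ (z - c) := by rw [map_sub]; linarith [hξK' c hc]
      _ ≤ ‖ξ‖ * ‖z - c‖ := (le_abs_self _).trans (ξ.le_opNorm _)
  obtain ⟨y, hy, hξy⟩ := ξ.exists_norm_lt_one_lt_apply
    (sub_lt_self ‖ξ‖ (div_pos (hu.trans hξw) hρ))
  have hb : ‖ρ • y‖ ≤ ρ := by
    rw [norm_smul, Real.norm_of_nonneg hρ.le]; nlinarith [norm_nonneg y]
  have key := (hlow _).trans (h _ hb)
  rw [div_le_iff₀ hξ, map_add, map_smul, smul_eq_mul] at key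
  have := mul_lt_mul_of_pos_left hξy hρ
  rw [mul_sub, mul_div_cancel₀ _ hρ.ne'] at this
  linarith

end ConvexCone

section SetValued

variable {X Z : Type*} [NormedAddCommGroup X] [NormedAddCommGroup Z] [NormedSpace ℝ Z]

theorem MetIncrWith.exists_mem_closedBall_subset {G : X → Set Z} {S : Set X}
    {C : ConvexCone ℝ Z} {xb x : X} {α δ r : ℝ} (hCcl : IsClosed (C : Set Z)) (hC0 : (0 : Z) ∈ C)
    (hmi : MetIncrWith G S C xb α δ) (hα : 0 < α) (hx : x ∈ closedBall xb δ ∩ S)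
    (hr : r ∈ Ioo 0 δ) (hGx : (G x).Nonempty) (hGxC : ∀ u ∈ G x, infDist u C ≤ (α - 1) * r) :
    ∃ z ∈ closedBall x r ∩ S, G z ⊆ C := by
  obtain ⟨z, hz, hzx⟩ := hmi x hx r hr
  refine ⟨z, hz, fun w hw => C.mem_of_forall_infDist_add_le hCcl hC0 (mul_pos hα hr.1)
    fun b hb => ?_⟩
  have hwb : infDist (w + b) (G x + C) ≤ r :=
    hzx <| (infDist_le_dist_of_mem hw).trans (by simpa [dist_eq_norm] using hb)
  have hGxC' : ∀ q ∈ G x + C, infDist q C ≤ (α - 1) * r := by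
    rintro _ ⟨u, hu, c, hc, rfl⟩
    exact (C.infDist_add_le ⟨0, hC0⟩ hc u).trans (hGxC u hu)
  calc infDist (w + b) C ≤ r + (α - 1) * r :=
        infDist_le_add_of_forall_infDist_le (hGx.add ⟨0, hC0⟩) hwb hGxC'
    _ = α * r := by ring

theorem ConvexCone.infDist_le_of_mem_add_smul_add_closedBall {H : X → Set Z}
    {C : ConvexCone ℝ Z} {A : Set Z} {l t η : ℝ} {v w : X} (hC : (C : Set Z).Nonempty)
    (hl : 0 ≤ l) (ht : 0 < t)
    (hHlip : ∀ x₁ x₂, hausdorffEDist (H x₁) (H x₂) ≤ ENNReal.ofReal (l * ‖x₁ - x₂‖))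
    (hvH : H v ⊆ C) (hAC : A ⊆ C) :
    ∀ u ∈ A + t • H w + closedBall 0 η, infDist u C ≤ t * (l * ‖w - v‖) + η := by
  rintro _ ⟨_, ⟨a, ha, _, ⟨p, hp, rfl⟩, rfl⟩, b, hb, rfl⟩
  have hpC : infDist p C ≤ l * ‖w - v‖ := ENNReal.toReal_le_of_le_ofReal (by positivity) <|
    calc infEDist p C ≤ infEDist p (H v) := infEDist_anti hvH
      _ ≤ hausdorffEDist (H w) (H v) := infEDist_le_hausdorffEDist_of_mem hp
      _ ≤ _ := hHlip w v
  calc infDist (a + t • p + b) C ≤ infDist (t • p) C + ‖b‖ := by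
        refine (infDist_le_infDist_add_dist (y := a + t • p)).trans
          (add_le_add ?_ (by simp [dist_eq_norm]))
        rw [add_comm]; exact C.infDist_add_le hC (hAC ha) _
    _ ≤ t * infDist p C + η := add_le_add (C.infDist_smul_le hC ht p) (mem_closedBall_zero_iff.1 hb)
    _ ≤ t * (l * ‖w - v‖) + η := by gcongr

end SetValued

section ContingentCone

variable {X : Type*} [NormedAddCommGroup X] [NormedSpace ℝ X]

theorem zero_mem_contingentCone {A : Set X} {xb : X} (h : xb ∈ A) :
    (0 : X) ∈ contingentCone A xb :=
  ⟨fun _ => 0, fun n => 1 / ((n : ℝ) + 1), tendsto_const_nhds,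
    tendsto_one_div_add_atTop_nhds_zero_nat, fun n => by positivity, fun n => by simpa using h⟩

theorem mem_contingentCone_of_infDist_le {A : Set X} {xb v : X} {vn : ℕ → X} {tn : ℕ → ℝ}
    (hA : A.Nonempty) (hvn : Tendsto vn atTop (𝓝 v)) (htn : Tendsto tn atTop (𝓝 0))
    (htn0 : ∀ n, 0 < tn n)
    (h : ∀ ε > 0, ∀ᶠ n in atTop, infDist (xb + tn n • vn n) A ≤ ε * tn n) :
    v ∈ contingentCone A xb := by
  choose z hzA hz using fun n => (infDist_lt_iff hA).1
    (lt_add_of_pos_right (infDist (xb + tn n • vn n) A) (mul_pos (htn0 n) (htn0 n)))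
  refine ⟨fun n => (tn n)⁻¹ • (z n - xb), tn, ?_, htn, htn0, fun n => by
    simpa [smul_inv_smul₀ (htn0 n).ne'] using hzA n⟩
  have hdiff : Tendsto (fun n => (tn n)⁻¹ • (z n - xb) - vn n) atTop (𝓝 0) := by
    refine Metric.tendsto_nhds.2 fun ε hε => ?_
    filter_upwards [h (ε / 2) (half_pos hε), htn.eventually (gt_mem_nhds (half_pos hε))]
      with n hnA hnt
    have ht := htn0 n
    have e : (tn n)⁻¹ • (z n - xb) - vn n = (tn n)⁻¹ • (z n - (xb + tn n • vn n)) := by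
      simp only [smul_sub, smul_add, inv_smul_smul₀ ht.ne']; abel
    rw [dist_zero_right, e, norm_smul, norm_inv, Real.norm_of_nonneg ht.le, ← dist_eq_norm,
      dist_comm, inv_mul_lt_iff₀ ht]
    nlinarith [hz n]
  simpa using hvn.add hdiff

end ContingentCone

theorem upperInv_inter_contingentCone_subset {X Z : Type*} [NormedAddCommGroup X]
    [NormedSpace ℝ X] [NormedAddCommGroup Z] [NormedSpace ℝ Z] {G H : X → Set Z} {S : Set X}
    {C : ConvexCone ℝ Z} {xb : X} (hCcl : IsClosed (C : Set Z)) (hC0 : (0 : Z) ∈ C)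
    (hG : ∀ x, (G x).Nonempty) (hxbS : xb ∈ S) (hxbG : G xb ⊆ C) (hmi : MetIncr G S C xb)
    (hH : OuterPrederivAt G H xb) (hHLip : HausLipschitz H) :
    upperInv H C ∩ contingentCone S xb ⊆ contingentCone (S ∩ {x | G x ⊆ C}) xb := by
  rintro v ⟨hvH, vn, tn, hvn, htn, htn0, hvnS⟩
  obtain ⟨α, hα, δ, hδ, hmiW⟩ := hmi
  obtain ⟨hhom, hpre⟩ := hH
  obtain ⟨l, hl, hlip⟩ := hHLip
  refine mem_contingentCone_of_infDist_le ⟨xb, hxbS, hxbG⟩ hvn htn htn0 fun ε hε => ?_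
  have hα1 : 0 < α - 1 := sub_pos.2 hα
  set η := (α - 1) * ε / (‖v‖ + 1) with hη
  obtain ⟨δ', hδ', hpre'⟩ := hpre η (by positivity)
  -- the excess of `G (xb + tn n • vn n)` over `C` is at most `tn n` times the quantity below,
  -- whose limit `η * ‖v‖` is below `(α - 1) * ε`
  have hcoef : ∀ᶠ n in atTop, l * ‖vn n - v‖ + η * ‖vn n‖ < (α - 1) * ε := by
    refine Tendsto.eventually_lt_const ?_
      ((tendsto_const_nhds.mul (hvn.sub_const v).norm).add (tendsto_const_nhds.mul hvn.norm))
    rw [sub_self, norm_zero, mul_zero, zero_add, hη, div_mul_eq_mul_div,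
      div_lt_iff₀ (by positivity)]
    nlinarith [mul_pos hα1 hε]
  have hd : Tendsto (fun n => tn n • vn n) atTop (𝓝 0) := by simpa using htn.smul hvn
  filter_upwards [hcoef, hd.eventually (closedBall_mem_nhds 0 (lt_min hδ hδ')),
    htn.eventually (gt_mem_nhds (div_pos hδ hε))] with n hn hnd hnt
  have ht := htn0 n
  have hxd : ‖xb + tn n • vn n - xb‖ ≤ min δ δ' := by simpa using hnd
  have hGx : ∀ u ∈ G (xb + tn n • vn n), infDist u C ≤ (α - 1) * (ε * tn n) := by
    intro u hu
    have hu' := hpre' _ (mem_closedBall_iff_norm.2 (hxd.trans (min_le_right _ _))) hu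
    rw [add_sub_cancel_left, hhom _ ht] at hu'
    refine (C.infDist_le_of_mem_add_smul_add_closedBall ⟨0, hC0⟩ hl ht hlip hvH hxbG _
      hu').trans ?_
    rw [norm_smul, Real.norm_of_nonneg ht.le]
    nlinarith
  obtain ⟨z, ⟨hzx, hzS⟩, hzC⟩ := hmiW.exists_mem_closedBall_subset hCcl hC0 (by linarith)
    ⟨mem_closedBall_iff_norm.2 (hxd.trans (min_le_left _ _)), hvnS n⟩
    ⟨mul_pos hε ht, by rwa [lt_div_iff₀ hε, mul_comm] at hnt⟩ (hG _) hGx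
  exact (infDist_le_dist_of_mem (show z ∈ S ∩ {x | G x ⊆ C} from ⟨hzS, hzC⟩)).trans
    (by rwa [dist_comm])

theorem LocWeakEffOn.neg_fderiv_notMem_interior {X Y : Type*} [NormedAddCommGroup X]
    [NormedSpace ℝ X] [NormedAddCommGroup Y] [NormedSpace ℝ Y] {f : X → Y} {R : Set X}
    {K : ConvexCone ℝ Y} {xb v : X} {Df : X →L[ℝ] Y} (hweff : LocWeakEffOn f R K xb)
    (hDf : HasFDerivAt f Df xb) (hv : v ∈ contingentCone R xb) :
    -Df v ∉ interior (K : Set Y) := by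
  intro hint
  obtain ⟨δ, hδ, hR⟩ := hweff
  obtain ⟨vn, tn, hvn, htn, htn0, hmem⟩ := hv
  have hd : Tendsto (fun n => tn n • vn n) atTop (𝓝 0) := by simpa using htn.smul hvn
  have hquot : Tendsto (fun n => (tn n)⁻¹ • (f (xb + tn n • vn n) - f xb)) atTop (𝓝 (Df v)) :=
    (hDf.hasFDerivWithinAt (s := univ)).lim hd (by simp) <|
      hvn.congr fun n => by rw [smul_smul, inv_mul_cancel₀ (htn0 n).ne', one_smul]
  obtain ⟨n, hn, hnδ⟩ := ((hquot.neg.eventually (isOpen_interior.mem_nhds hint)).and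
    (hd.eventually (closedBall_mem_nhds 0 hδ))).exists
  refine hR _ ⟨hmem n, by simpa using hnδ⟩ ?_
  simpa [smul_neg, smul_inv_smul₀ (htn0 n).ne'] using K.smul_mem_interior (htn0 n) hn

theorem ConvexCone.exists_dual_nonneg_of_neg_notMem_interior {Y : Type*} [NormedAddCommGroup Y]
    [NormedSpace ℝ Y] {K : ConvexCone ℝ Y} {P : Set Y} (hKint : (interior (K : Set Y)).Nonempty)
    (hP0 : (0 : Y) ∈ P) (hconv : Convex ℝ (P + (K : Set Y)))
    (hP : ∀ p ∈ P, -p ∉ interior (K : Set Y)) :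
    ∃ q : Y →L[ℝ] ℝ, q ≠ 0 ∧ (∀ y ∈ K, 0 ≤ q y) ∧ ∀ p ∈ P, 0 ≤ q p := by
  have hdisj : Disjoint (-interior (K : Set Y)) (P + (K : Set Y)) := by
    refine Set.disjoint_left.2 ?_
    rintro _ hy ⟨p, hp, k, hk, rfl⟩
    exact hP p hp (by simpa using K.add_mem_interior hk hy)
  obtain ⟨q, u, hqint, hqPK⟩ :=
    geometric_hahn_banach_open K.convex.interior.neg isOpen_interior.neg hconv hdisj
  obtain ⟨y₀, hy₀⟩ := hKint
  have hu : 0 ≤ u := le_of_forall_pos_le_add_mul (b := q y₀) fun t ht => by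
    have := hqint (-(t • y₀)) (by simpa using K.smul_mem_interior ht hy₀)
    simp only [map_neg, map_smul, smul_eq_mul] at this
    linarith
  have hqP : ∀ p ∈ P, 0 ≤ q p := fun p hp =>
    hu.trans <| le_of_forall_pos_le_add_mul (b := q y₀) fun t ht => by
      simpa using hqPK _ (add_mem_add hp (K.smul_mem ht (interior_subset hy₀)))
  refine ⟨q, ?_, fun y hy => hu.trans (by simpa using hqPK _ (add_mem_add hP0 hy)), hqP⟩
  rintro rfl
  have h1 := hqint (-y₀) (neg_mem_neg.2 hy₀)
  have h2 := hqPK _ (add_mem_add hP0 (interior_subset hy₀))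
  simp only [zero_apply] at h1 h2
  linarith

theorem statement_12_general
    {X Y Z : Type*} [NormedAddCommGroup X] [NormedSpace ℝ X]
    [NormedAddCommGroup Y] [NormedSpace ℝ Y]
    [NormedAddCommGroup Z] [NormedSpace ℝ Z]
    (K : Set Y) (hKconv : Convex ℝ K)
    (hKcone : ∀ t : ℝ, 0 < t → ∀ y ∈ K, t • y ∈ K) (hKint : (interior K).Nonempty)
    (S : Set X)
    (C : Set Z) (hCcl : IsClosed C) (hCconv : Convex ℝ C)
    (hCcone : ∀ t : ℝ, 0 < t → ∀ z ∈ C, t • z ∈ C) (hC0 : (0:Z) ∈ C)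
    (f : X → Y) (G : X → Set Z) (hG : ∀ x, (G x).Nonempty)
    (xb : X) (hxbS : xb ∈ S) (hxbG : G xb ⊆ C)
    (hweff : LocWeakEffOn f (S ∩ {x | G x ⊆ C}) K xb)
    (Df : X →L[ℝ] Y) (hDf : HasFDerivAt f Df xb)
    (hmi : MetIncr G S C xb)
    (H : X → Set Z) (hH : OuterPrederivAt G H xb)
    (hconvlike : Convex ℝ ((fun v => Df v) '' (upperInv H C ∩ contingentCone S xb) + K))
    (hH0 : H 0 ⊆ C) (hHLip : HausLipschitz H) :
    ∃ q : Y →L[ℝ] ℝ, q ≠ 0 ∧ (∀ y ∈ K, 0 ≤ q y) ∧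
      ∀ v ∈ upperInv H C ∩ contingentCone S xb, (-(q.comp Df)) v ≤ 0 := by
  have hT := upperInv_inter_contingentCone_subset (C := ConvexCone.ofConvex hCconv hCcone)
    hCcl hC0 hG hxbS hxbG hmi hH hHLip
  obtain ⟨q, hq0, hqK, hqP⟩ :=
    ConvexCone.exists_dual_nonneg_of_neg_notMem_interior (K := ConvexCone.ofConvex hKconv hKcone)
      (P := Df '' (upperInv H C ∩ contingentCone S xb)) hKint
      ⟨0, ⟨hH0, zero_mem_contingentCone hxbS⟩, map_zero Df⟩ hconvlike
      (by rintro _ ⟨v, hv, rfl⟩; exact hweff.neg_fderiv_notMem_interior hDf (hT hv))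
  exact ⟨q, hq0, hqK, fun v hv => by simpa using hqP _ ⟨v, hv, rfl⟩⟩

/-- dual necessary condition for local weak efficiency in adjoint form. -/
theorem statement_12
    {X Y Z : Type*} [NormedAddCommGroup X] [NormedSpace ℝ X] [CompleteSpace X]
    [NormedAddCommGroup Y] [NormedSpace ℝ Y] [CompleteSpace Y]
    [NormedAddCommGroup Z] [NormedSpace ℝ Z] [CompleteSpace Z]
    (K : Set Y) (hKconv : Convex ℝ K)
    (hKcone : ∀ t : ℝ, 0 < t → ∀ y ∈ K, t • y ∈ K) (hKint : (interior K).Nonempty)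
    (S : Set X) (hSne : S.Nonempty) (hScl : IsClosed S)
    (C : Set Z) (hCcl : IsClosed C) (hCconv : Convex ℝ C)
    (hCcone : ∀ t : ℝ, 0 < t → ∀ z ∈ C, t • z ∈ C) (hC0 : (0:Z) ∈ C)
    (hCne0 : C ≠ {0}) (hCneuniv : C ≠ Set.univ)
    (f : X → Y) (G : X → Set Z) (hG : ∀ x, (G x).Nonempty)
    (xb : X) (hxbS : xb ∈ S) (hxbG : G xb ⊆ C)
    (hweff : LocWeakEffOn f (S ∩ {x | G x ⊆ C}) K xb)
    (Df : X →L[ℝ] Y) (hDf : HasFDerivAt f Df xb)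
    (hlsc : LscAround G xb) (hmi : MetIncr G S C xb)
    (H : X → Set Z) (hH : OuterPrederivAt G H xb)
    (hconvlike : Convex ℝ ((fun v => Df v) '' (upperInv H C ∩ contingentCone S xb) + K))
    (hH0 : H 0 ⊆ C) (hHLip : HausLipschitz H) :
    ∃ q : Y →L[ℝ] ℝ, q ≠ 0 ∧ (∀ y ∈ K, 0 ≤ q y) ∧
      ∀ v ∈ upperInv H C ∩ contingentCone S xb, (-(q.comp Df)) v ≤ 0 :=
  statement_12_general K hKconv hKcone hKint S C hCcl hCconv hCcone hC0 f G hG xb hxbS hxbG hweff Df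
    hDf hmi H hH hconvlike hH0 hHLip
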